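/- Cost-to-go estimate at a global maximizer: Let α ≥ 0, assume each diagonal block C_{ii} of C is positive semidefinite, and let Ĝ ∈ O(d)^{⊗n} be a global maximizer of (QP). Then for every G ∈ O(d)^{⊗n}, f(Ĝ) − f(G) ≤ (‖C̃‖ + ‖C̃Ĝ‖_∞) · d(G,Ĝ)², where f(G) := tr(Gᵀ C G). -/

import Mathlib

open Matrix BigOperators

noncomputable section
namespace GroupSync

variable {n d : ℕ}

/-- The old Mathlib `Matrix.PosSemidef.sqrt` (removed since), reproduced verbatim. -/
def posSemidefSqrt {m : Type*} [Fintype m] [DecidableEq m] {A : Matrix m m ℝ}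
    (hA : A.PosSemidef) : Matrix m m ℝ :=
  (hA.1.eigenvectorUnitary : Matrix m m ℝ) * diagonal ((↑) ∘ (√·) ∘ hA.1.eigenvalues) *
    (star hA.1.eigenvectorUnitary : Matrix m m ℝ)

/-- The old Mathlib `Matrix.isHermitian_transpose_mul_self` (removed since). -/
theorem isHermitian_transpose_mul_self' {m k : Type*} [Fintype m] (A : Matrix m k ℝ) :
    (Aᵀ * A).IsHermitian := by
  simp [IsHermitian, conjTranspose_eq_transpose_of_trivial]

/-- Frobenius norm of a real matrix. -/
def frob {m k : Type*} [Fintype m] [Fintype k] (X : Matrix m k ℝ) : ℝ :=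
  Real.sqrt (∑ i, ∑ j, (X i j) ^ 2)

/-- Spectral (operator) norm of a real matrix: the operator norm of the induced
linear map between Euclidean spaces. -/
def spec {m k : Type*} [Fintype m] [Fintype k] [DecidableEq k] (X : Matrix m k ℝ) : ℝ :=
  ‖LinearMap.toContinuousLinearMap (Matrix.toEuclideanLin X)‖

/-- Nuclear norm: trace of the positive semidefinite square root of `X * Xᵀ`
(i.e. the sum of the singular values of `X`). -/
def nuclear {m k : Type*} [Fintype m] [Fintype k] [DecidableEq m] (X : Matrix m k ℝ) : ℝ :=
  (posSemidefSqrt (Matrix.posSemidef_self_mul_conjTranspose X)).trace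

/-- The positive semidefinite square root of `X * Xᵀ`. -/
def psdSqrtMulT {m k : Type*} [Fintype m] [Fintype k] [DecidableEq m] (X : Matrix m k ℝ) :
    Matrix m m ℝ :=
  posSemidefSqrt (Matrix.posSemidef_self_mul_conjTranspose X)

/-- Membership in the orthogonal group `O(d)`. -/
def IsOd (g : Matrix (Fin d) (Fin d) ℝ) : Prop :=
  gᵀ * g = 1 ∧ g * gᵀ = 1

/-- Membership in the special orthogonal group `SO(d)`. -/
def IsSOd (g : Matrix (Fin d) (Fin d) ℝ) : Prop :=
  IsOd g ∧ g.det = 1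

/-- The `i`-th `d × d` block of an `nd × d` matrix. -/
def blk (X : Matrix (Fin n × Fin d) (Fin d) ℝ) (i : Fin n) : Matrix (Fin d) (Fin d) ℝ :=
  Matrix.of fun a b => X (i, a) b

/-- Membership in `O(d)^{⊗n}`: every `d × d` block is orthogonal. -/
def OdN (G : Matrix (Fin n × Fin d) (Fin d) ℝ) : Prop :=
  ∀ i : Fin n, IsOd (blk G i)

/-- Membership in `SO(d)^{⊗n}`. -/
def SOdN (G : Matrix (Fin n × Fin d) (Fin d) ℝ) : Prop :=
  ∀ i : Fin n, IsSOd (blk G i)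

/-- The `i`-th block column (an `nd × d` matrix) of an `nd × nd` matrix. -/
def bcol (M : Matrix (Fin n × Fin d) (Fin n × Fin d) ℝ) (i : Fin n) :
    Matrix (Fin n × Fin d) (Fin d) ℝ :=
  Matrix.of fun p b => M p (i, b)

/-- The `ij`-th `d × d` block of an `nd × nd` matrix. -/
def dblk (M : Matrix (Fin n × Fin d) (Fin n × Fin d) ℝ) (i j : Fin n) :
    Matrix (Fin d) (Fin d) ℝ :=
  Matrix.of fun a b => M (i, a) (j, b)

/-- `G' ∈ T_α(G)` (where `Ct = C + α I`): `G' ∈ O(d)^{⊗n}` and each block `G'_i` is a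
nearest point of `C̃ᵢᵀ G` in `O(d)` w.r.t. the Frobenius norm. -/
def InT (Ct : Matrix (Fin n × Fin d) (Fin n × Fin d) ℝ)
    (G G' : Matrix (Fin n × Fin d) (Fin d) ℝ) : Prop :=
  OdN G' ∧ ∀ i : Fin n, ∀ X : Matrix (Fin d) (Fin d) ℝ, IsOd X →
    frob (blk G' i - (bcol Ct i)ᵀ * G) ≤ frob (X - (bcol Ct i)ᵀ * G)

/-- `G' ∈ ST_α(G)`: the `SO(d)` analogue of `InT`. -/
def InST (Ct : Matrix (Fin n × Fin d) (Fin n × Fin d) ℝ)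
    (G G' : Matrix (Fin n × Fin d) (Fin d) ℝ) : Prop :=
  SOdN G' ∧ ∀ i : Fin n, ∀ X : Matrix (Fin d) (Fin d) ℝ, IsSOd X →
    frob (blk G' i - (bcol Ct i)ᵀ * G) ≤ frob (X - (bcol Ct i)ᵀ * G)

/-- The quotient distance `d(X, Y) = min_{g ∈ O(d)} ‖X − Y g‖_F`. -/
def dOrth (X Y : Matrix (Fin n × Fin d) (Fin d) ℝ) : ℝ :=
  ⨅ g : {g : Matrix (Fin d) (Fin d) ℝ // IsOd g}, frob (X - Y * g.1)

/-- The objective function `f(G) = tr(Gᵀ C G)`. -/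
def obj (C : Matrix (Fin n × Fin d) (Fin n × Fin d) ℝ)
    (G : Matrix (Fin n × Fin d) (Fin d) ℝ) : ℝ :=
  Matrix.trace (Gᵀ * C * G)

/-- Hadamard (entrywise) product. -/
def had {m k : Type*} (X Y : Matrix m k ℝ) : Matrix m k ℝ :=
  Matrix.of fun p q => X p q * Y p q

/-- `W ⊗ (1_d 1_dᵀ)`, the Kronecker product of `W` with the all-ones `d × d` matrix. -/
def kron1 (W : Matrix (Fin n) (Fin n) ℝ) : Matrix (Fin n × Fin d) (Fin n × Fin d) ℝ :=
  Matrix.kroneckerMap (· * ·) W (Matrix.of fun (_ _ : Fin d) => (1 : ℝ))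

/-- The all-ones matrix `1_m 1_mᵀ`. -/
def onesMat (m : Type*) : Matrix m m ℝ :=
  Matrix.of fun _ _ => (1 : ℝ)

/-- `symblockdiag`: symmetrize the diagonal `d × d` blocks, zero out all other blocks. -/
def sbd (X : Matrix (Fin n × Fin d) (Fin n × Fin d) ℝ) :
    Matrix (Fin n × Fin d) (Fin n × Fin d) ℝ :=
  Matrix.of fun p q => if p.1 = q.1 then (X p q + X (p.1, q.2) (q.1, p.2)) / 2 else 0

/-- `S(G) = symblockdiag(C G Gᵀ) − C`. -/
def Smat (C : Matrix (Fin n × Fin d) (Fin n × Fin d) ℝ)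
    (G : Matrix (Fin n × Fin d) (Fin d) ℝ) : Matrix (Fin n × Fin d) (Fin n × Fin d) ℝ :=
  sbd (C * (G * Gᵀ)) - C

/-- `G` is a second-order critical point of (QP): `S(G) G = 0` and
`⟨H, S(G) H⟩ ≥ 0` for all tangent directions `H` (blockwise `Hᵢ Gᵢᵀ` skew-symmetric). -/
def IsSOC (C : Matrix (Fin n × Fin d) (Fin n × Fin d) ℝ)
    (G : Matrix (Fin n × Fin d) (Fin d) ℝ) : Prop :=
  Smat C G * G = 0 ∧
  ∀ H : Matrix (Fin n × Fin d) (Fin d) ℝ,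
    (∀ i : Fin n, (blk H i * (blk G i)ᵀ)ᵀ = -(blk H i * (blk G i)ᵀ)) →
    0 ≤ Matrix.trace (Hᵀ * (Smat C G * H))

/-- Smallest singular value of a square matrix, as the minimum of `‖M v‖` over
unit vectors `v`. -/
def sigmaMin (M : Matrix (Fin d) (Fin d) ℝ) : ℝ :=
  ⨅ v : {v : Fin d → ℝ // ∑ a, (v a) ^ 2 = 1}, Real.sqrt (∑ a, (M.mulVec v.1 a) ^ 2)

/-- The singular values of a square matrix: square roots of the eigenvalues of `Mᵀ M`. -/
def singVal (M : Matrix (Fin d) (Fin d) ℝ) (l : Fin d) : ℝ :=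
  Real.sqrt ((isHermitian_transpose_mul_self' M).eigenvalues l)

/-- Smallest eigenvalue of a (symmetric) matrix, as the minimum Rayleigh quotient
over unit vectors. -/
def lambdaMin {m : Type*} [Fintype m] (M : Matrix m m ℝ) : ℝ :=
  ⨅ v : {v : m → ℝ // ∑ i, (v i) ^ 2 = 1}, v.1 ⬝ᵥ M.mulVec v.1

/-- `D_α(G)`: block diagonal of the psd square roots of `(C̃ᵢᵀ G)(C̃ᵢᵀ G)ᵀ`, minus `C̃`. -/
def Dmat (Ct : Matrix (Fin n × Fin d) (Fin n × Fin d) ℝ)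
    (G : Matrix (Fin n × Fin d) (Fin d) ℝ) : Matrix (Fin n × Fin d) (Fin n × Fin d) ℝ :=
  (Matrix.of fun p q =>
    if p.1 = q.1 then psdSqrtMulT ((bcol Ct p.1)ᵀ * G) p.2 q.2 else 0) - Ct

/-- The residual function `ρ_α(G) = ‖D_α(G) G‖_F`. -/
def rho (Ct : Matrix (Fin n × Fin d) (Fin n × Fin d) ℝ)
    (G : Matrix (Fin n × Fin d) (Fin d) ℝ) : ℝ :=
  frob (Dmat Ct G * G)

/-- Blockwise infinity norm: `‖X‖_∞ = max_i ‖X_i‖` (spectral norm of the blocks). -/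
def binf (X : Matrix (Fin n × Fin d) (Fin d) ℝ) : ℝ :=
  ⨆ i : Fin n, spec (blk X i)

/-!
Right-multiplying `Ĝ` by `g ∈ O(d)` changes neither `f(Ĝ)` nor `‖C̃Ĝ‖_∞`, and on `O(d)^{⊗n}` the
objectives of `C` and `C̃` differ by the constant `α n d`. So it suffices to bound
`f̃(H) − f̃(G)` by `(‖C̃‖ + ‖C̃H‖_∞)‖H − G‖_F²` for every maximizer `H` of `f̃ = tr(Gᵀ C̃ G)`.
With `Δ = H − G` we have `f̃(H) − f̃(G) = 2⟨Δ, C̃H⟩ − ⟨Δ, C̃Δ⟩`, and the quadratic term is at most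
`‖C̃‖‖Δ‖_F²`. For the linear term, comparing `H` with the points obtained by changing one block
shows that each `Mᵢ = (C̃H)ᵢ Hᵢᵀ` is positive semidefinite: a matrix `N` with `tr(NR) ≤ tr N` for all
orthogonal `R` is symmetric (take `R = exp(tK)`, `K` skew) and positive semidefinite (take `R` a
Householder reflection). Finally `Bᵢ = Hᵢ Δᵢᵀ` satisfies `Bᵢ + Bᵢᵀ = Bᵢ Bᵢᵀ`, hence
`2⟨Δᵢ, (C̃H)ᵢ⟩ = tr(Mᵢ Bᵢ Bᵢᵀ) ≤ ‖Mᵢ‖ ‖Δᵢ‖_F²` with `‖Mᵢ‖ = ‖(C̃H)ᵢ‖`.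
-/

lemma frob_sq_eq_trace {m k : Type*} [Fintype m] [Fintype k] (X : Matrix m k ℝ) :
    frob X ^ 2 = (Xᵀ * X).trace := by
  rw [frob, Real.sq_sqrt (by positivity), Finset.sum_comm]
  simp [Matrix.trace, Matrix.mul_apply, sq]

lemma frob_sub_comm {m k : Type*} [Fintype m] [Fintype k] (X Y : Matrix m k ℝ) :
    frob (X - Y) = frob (Y - X) := by
  simp only [frob, Matrix.sub_apply]
  congr 1
  exact Finset.sum_congr rfl fun i _ => Finset.sum_congr rfl fun j _ => by ring

lemma transpose_eq_of_posSemidef {q : Type*} {A : Matrix q q ℝ} (hA : A.PosSemidef) : Aᵀ = A := by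
  simpa [conjTranspose_eq_transpose_of_trivial] using hA.isHermitian.eq

section Orthogonal

variable {q : Type*} [Fintype q] [DecidableEq q]

lemma transpose_mem_orthogonalGroup {g : Matrix q q ℝ} (hg : g ∈ orthogonalGroup q ℝ) :
    gᵀ ∈ orthogonalGroup q ℝ := by
  rw [mem_orthogonalGroup_iff, transpose_transpose]
  exact (mem_orthogonalGroup_iff' q ℝ).1 hg

lemma trace_mul_mul_transpose_of_mem_orthogonalGroup {H : Matrix q q ℝ}
    (hH : H ∈ orthogonalGroup q ℝ) (A : Matrix q q ℝ) : (H * A * Hᵀ).trace = A.trace := by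
  rw [trace_mul_comm, ← Matrix.mul_assoc, (mem_orthogonalGroup_iff' q ℝ).1 hH, Matrix.one_mul]

lemma trace_transpose_mul_mul_of_mem_orthogonalGroup {H : Matrix q q ℝ}
    (hH : H ∈ orthogonalGroup q ℝ) (A : Matrix q q ℝ) : (Hᵀ * A * H).trace = A.trace := by
  simpa using trace_mul_mul_transpose_of_mem_orthogonalGroup (transpose_mem_orthogonalGroup hH) A

lemma isOd_iff_mem_orthogonalGroup {d : ℕ} {g : Matrix (Fin d) (Fin d) ℝ} :
    IsOd g ↔ g ∈ orthogonalGroup (Fin d) ℝ :=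
  ⟨fun h => (mem_orthogonalGroup_iff' _ _).2 h.1,
    fun h => ⟨(mem_orthogonalGroup_iff' _ _).1 h, (mem_orthogonalGroup_iff _ _).1 h⟩⟩

end Orthogonal

section OperatorNorm

open scoped Matrix.Norms.L2Operator RealInnerProductSpace

variable {m k q : Type*} [Fintype m] [Fintype k] [Fintype q] [DecidableEq q]

lemma spec_eq_l2_opNorm [DecidableEq k] (X : Matrix m k ℝ) : spec X = ‖X‖ := rfl

lemma l2_opNorm_mul_of_mem_orthogonalGroup (A : Matrix m q ℝ) {g : Matrix q q ℝ}
    (hg : g ∈ orthogonalGroup q ℝ) : ‖A * g‖ = ‖A‖ := by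
  cases isEmpty_or_nonempty q
  · exact congrArg _ (Subsingleton.elim _ _)
  have hnorm : ∀ {u : Matrix q q ℝ}, u ∈ orthogonalGroup q ℝ → ‖u‖ = 1 :=
    fun hu => CStarRing.norm_of_mem_unitary hu
  refine le_antisymm (by simpa [hnorm hg] using l2_opNorm_mul A g) ?_
  calc ‖A‖ = ‖A * g * gᵀ‖ := by
        rw [Matrix.mul_assoc, (mem_orthogonalGroup_iff q ℝ).1 hg, Matrix.mul_one]
    _ ≤ ‖A * g‖ * ‖gᵀ‖ := l2_opNorm_mul _ _
    _ = ‖A * g‖ := by rw [hnorm (transpose_mem_orthogonalGroup hg), mul_one]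

lemma dotProduct_mulVec_le_l2_opNorm [DecidableEq m] (M : Matrix m m ℝ) (x : m → ℝ) :
    x ⬝ᵥ M *ᵥ x ≤ ‖M‖ * (x ⬝ᵥ x) := by
  set y : EuclideanSpace ℝ m := WithLp.toLp 2 x
  have hy : x ⬝ᵥ x = ‖y‖ ^ 2 := by
    rw [EuclideanSpace.real_norm_sq_eq]
    simp [y, dotProduct, sq]
  calc x ⬝ᵥ M *ᵥ x = ⟪y, toEuclideanCLM (𝕜 := ℝ) M y⟫ := (inner_toEuclideanCLM M y y).symm
    _ ≤ ‖y‖ * ‖toEuclideanCLM (𝕜 := ℝ) M y‖ := real_inner_le_norm _ _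
    _ ≤ ‖y‖ * (‖M‖ * ‖y‖) := by gcongr; exact (toEuclideanCLM (𝕜 := ℝ) M).le_opNorm y
    _ = ‖M‖ * (x ⬝ᵥ x) := by rw [hy]; ring

lemma trace_mul_mul_transpose_eq_sum (N : Matrix m m ℝ) (B : Matrix m k ℝ) :
    (N * (B * Bᵀ)).trace = ∑ c, (fun a => B a c) ⬝ᵥ N *ᵥ (fun a => B a c) := by
  rw [← Matrix.mul_assoc, Matrix.trace_mul_comm]
  simp [Matrix.trace, Matrix.mul_apply, Matrix.mulVec, dotProduct, Finset.mul_sum]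

lemma trace_mul_mul_transpose_le [DecidableEq m] (M : Matrix m m ℝ) (B : Matrix m k ℝ) :
    (M * (B * Bᵀ)).trace ≤ ‖M‖ * (B * Bᵀ).trace := by
  calc (M * (B * Bᵀ)).trace = ∑ c, (fun a => B a c) ⬝ᵥ M *ᵥ (fun a => B a c) :=
        trace_mul_mul_transpose_eq_sum M B
    _ ≤ ∑ c, ‖M‖ * ((fun a => B a c) ⬝ᵥ 1 *ᵥ (fun a => B a c)) :=
        Finset.sum_le_sum fun c _ => by simpa using dotProduct_mulVec_le_l2_opNorm M _
    _ = ‖M‖ * (B * Bᵀ).trace := by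
        rw [← Finset.mul_sum, ← trace_mul_mul_transpose_eq_sum, Matrix.one_mul]

end OperatorNorm

section TraceMaximum

open scoped Matrix.Norms.L2Operator

variable {q : Type*} [Fintype q] [DecidableEq q]

lemma exp_smul_mem_orthogonalGroup {K : Matrix q q ℝ} (hK : Kᵀ = -K) (t : ℝ) :
    NormedSpace.exp (t • K) ∈ orthogonalGroup q ℝ := by
  have hexp : (NormedSpace.exp (t • K))ᵀ = NormedSpace.exp (-(t • K)) := by
    rw [← Matrix.exp_transpose, transpose_smul, hK, smul_neg]
  rw [mem_orthogonalGroup_iff', hexp,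
    ← Matrix.exp_add_of_commute _ _ (Commute.refl (t • K)).neg_left, neg_add_cancel,
    NormedSpace.exp_zero]

lemma hasDerivAt_trace_mul_exp_smul (N K : Matrix q q ℝ) :
    HasDerivAt (fun t : ℝ => (N * NormedSpace.exp (t • K)).trace) (N * K).trace 0 := by
  have h := (hasDerivAt_exp_smul_const (𝕂 := ℝ) K 0).const_mul N
  rw [zero_smul, NormedSpace.exp_zero, one_mul] at h
  exact (traceLinearMap q ℝ ℝ).toContinuousLinearMap.hasFDerivAt.comp_hasDerivAt 0 h

lemma one_sub_smul_vecMulVec_mem_orthogonalGroup {v : q → ℝ} (hv : v ⬝ᵥ v ≠ 0) :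
    1 - (2 / (v ⬝ᵥ v)) • vecMulVec v v ∈ orthogonalGroup q ℝ := by
  set c := 2 / (v ⬝ᵥ v)
  have hc : c * c * (v ⬝ᵥ v) = c + c := by
    linear_combination c * (div_mul_cancel₀ (2 : ℝ) hv)
  have hVV : vecMulVec v v * vecMulVec v v = (v ⬝ᵥ v) • vecMulVec v v := by
    rw [vecMulVec_mul_vecMulVec, vecMulVec_smul]
  rw [mem_orthogonalGroup_iff, transpose_sub, transpose_one, transpose_smul, transpose_vecMulVec]
  calc (1 - c • vecMulVec v v) * (1 - c • vecMulVec v v)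
      = 1 - (c + c - c * c * (v ⬝ᵥ v)) • vecMulVec v v := by
        simp only [sub_mul, mul_sub, Matrix.one_mul, Matrix.mul_one, Matrix.smul_mul,
          Matrix.mul_smul, hVV, smul_smul]
        module
    _ = 1 := by rw [hc, sub_self, zero_smul, sub_zero]

variable {N : Matrix q q ℝ}

lemma transpose_eq_of_forall_trace_mul_le
    (h : ∀ R ∈ orthogonalGroup q ℝ, (N * R).trace ≤ N.trace) : Nᵀ = N := by
  have hskew : ∀ K : Matrix q q ℝ, Kᵀ = -K → (N * K).trace = 0 := by
    intro K hK
    have hmax : IsLocalMax (fun t : ℝ => (N * NormedSpace.exp (t • K)).trace) 0 :=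
      Filter.Eventually.of_forall fun t => by
        simpa using h _ (exp_smul_mem_orthogonalGroup hK t)
    exact hmax.hasDerivAt_eq_zero (hasDerivAt_trace_mul_exp_smul N K)
  ext a b
  have := hskew (single b a 1 - single a b 1) (by simp [transpose_sub])
  simp [Matrix.mul_sub, trace_sub, trace_mul_single] at this
  rw [transpose_apply]
  linarith

lemma dotProduct_mulVec_nonneg_of_forall_trace_mul_le
    (h : ∀ R ∈ orthogonalGroup q ℝ, (N * R).trace ≤ N.trace) (v : q → ℝ) :
    0 ≤ v ⬝ᵥ N *ᵥ v := by
  rcases eq_or_ne (v ⬝ᵥ v) 0 with hv | hv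
  · simp [dotProduct_self_eq_zero.1 hv]
  have hR := h _ (one_sub_smul_vecMulVec_mem_orthogonalGroup hv)
  rw [Matrix.mul_sub, Matrix.mul_one, trace_sub, Matrix.mul_smul, trace_smul, mul_vecMulVec,
    trace_vecMulVec, dotProduct_comm (N *ᵥ v), smul_eq_mul] at hR
  have hpos : 0 < 2 / (v ⬝ᵥ v) :=
    div_pos two_pos ((Finset.sum_nonneg fun i _ => mul_self_nonneg (v i)).lt_of_ne' hv)
  nlinarith

lemma posSemidef_of_forall_trace_mul_le
    (h : ∀ R ∈ orthogonalGroup q ℝ, (N * R).trace ≤ N.trace) : N.PosSemidef :=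
  .of_dotProduct_mulVec_nonneg (transpose_eq_of_forall_trace_mul_le h)
    fun x => dotProduct_mulVec_nonneg_of_forall_trace_mul_le h x

end TraceMaximum

section BlockOptimality

open scoped Matrix.Norms.L2Operator

variable {q : Type*} [Fintype q] [DecidableEq q]

lemma posSemidef_mul_transpose_of_forall_le {H Y C : Matrix q q ℝ}
    (hH : H ∈ orthogonalGroup q ℝ) (hC : C.PosSemidef)
    (h : ∀ X ∈ orthogonalGroup q ℝ,
      ((H - X)ᵀ * (C * (H - X))).trace ≤ 2 * ((H - X)ᵀ * Y).trace) :
    (Y * Hᵀ).PosSemidef := by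
  suffices hN : (Y * Hᵀ - C).PosSemidef by simpa using hN.add hC
  refine posSemidef_of_forall_trace_mul_le fun R hR => ?_
  have hdiff : H - Rᵀ * H = (1 - Rᵀ) * H := by rw [Matrix.sub_mul, Matrix.one_mul]
  have hlin : ((H - Rᵀ * H)ᵀ * Y).trace = (Y * Hᵀ).trace - (Y * Hᵀ * R).trace := by
    rw [hdiff, transpose_mul, transpose_sub, transpose_one, transpose_transpose, Matrix.mul_assoc,
      trace_mul_comm, Matrix.sub_mul, Matrix.one_mul, Matrix.sub_mul, trace_sub,
      Matrix.mul_assoc, trace_mul_comm R]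
  have hquad : ((H - Rᵀ * H)ᵀ * (C * (H - Rᵀ * H))).trace = 2 * C.trace - 2 * (C * R).trace := by
    have hCR : (C * Rᵀ).trace = (C * R).trace := by
      rw [← trace_transpose, transpose_mul, transpose_transpose, transpose_eq_of_posSemidef hC,
        trace_mul_comm]
    have hconj : ((1 - Rᵀ) * H)ᵀ * (C * ((1 - Rᵀ) * H)) = Hᵀ * ((1 - R) * C * (1 - Rᵀ)) * H := by
      simp only [transpose_mul, transpose_sub, transpose_one, transpose_transpose, Matrix.mul_assoc]
    rw [hdiff, hconj, trace_transpose_mul_mul_of_mem_orthogonalGroup hH]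
    simp only [Matrix.sub_mul, Matrix.mul_sub, Matrix.one_mul, Matrix.mul_one, trace_sub,
      trace_mul_mul_transpose_of_mem_orthogonalGroup hR, hCR, trace_mul_comm R C]
    ring
  have hX := h (Rᵀ * H) (mul_mem (transpose_mem_orthogonalGroup hR) hH)
  rw [hlin, hquad] at hX
  rw [Matrix.sub_mul, trace_sub, trace_sub]
  linarith

lemma two_mul_trace_le_of_posSemidef {H G Y : Matrix q q ℝ} (hH : H ∈ orthogonalGroup q ℝ)
    (hG : G ∈ orthogonalGroup q ℝ) (hY : (Y * Hᵀ).PosSemidef) :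
    2 * ((H - G)ᵀ * Y).trace ≤ spec Y * frob (H - G) ^ 2 := by
  set M := Y * Hᵀ with hM
  set B := H * (H - G)ᵀ with hB
  -- `B = 1 - H Gᵀ` with `H Gᵀ` orthogonal, whence:
  have hBB : B + Bᵀ = B * Bᵀ := by
    have hQ : H * Gᵀ * (H * Gᵀ)ᵀ = 1 :=
      (mem_orthogonalGroup_iff q ℝ).1 (mul_mem hH (transpose_mem_orthogonalGroup hG))
    rw [hB, transpose_sub, Matrix.mul_sub, (mem_orthogonalGroup_iff q ℝ).1 hH, transpose_sub,
      transpose_one, Matrix.sub_mul, Matrix.mul_sub, Matrix.mul_sub, Matrix.one_mul,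
      Matrix.mul_one, Matrix.one_mul, hQ]
    abel
  have hlin : ((H - G)ᵀ * Y).trace = (M * B).trace := by
    rw [hM, hB, trace_mul_comm, Matrix.mul_assoc, ← Matrix.mul_assoc Hᵀ,
      (mem_orthogonalGroup_iff' q ℝ).1 hH, Matrix.one_mul]
  have hsym : (M * Bᵀ).trace = (M * B).trace := by
    rw [← trace_transpose, transpose_mul, transpose_transpose, transpose_eq_of_posSemidef hY,
      trace_mul_comm]
  have hconj : B * Bᵀ = H * ((H - G)ᵀ * (H - G)) * Hᵀ := by
    simp only [hB, transpose_mul, transpose_transpose, Matrix.mul_assoc]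
  calc 2 * ((H - G)ᵀ * Y).trace = (M * (B * Bᵀ)).trace := by
        rw [← hBB, Matrix.mul_add, trace_add, hsym, hlin]; ring
    _ ≤ ‖M‖ * (B * Bᵀ).trace := trace_mul_mul_transpose_le M B
    _ = spec Y * frob (H - G) ^ 2 := by
        rw [hM, l2_opNorm_mul_of_mem_orthogonalGroup _ (transpose_mem_orthogonalGroup hH), hconj,
          trace_mul_mul_transpose_of_mem_orthogonalGroup hH, frob_sq_eq_trace, spec_eq_l2_opNorm]

end BlockOptimality

section Blocks

lemma blk_sub (X Y : Matrix (Fin n × Fin d) (Fin d) ℝ) (i : Fin n) :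
    blk (X - Y) i = blk X i - blk Y i :=
  rfl

lemma blk_mul_eq_sum (M : Matrix (Fin n × Fin d) (Fin n × Fin d) ℝ)
    (E : Matrix (Fin n × Fin d) (Fin d) ℝ) (i : Fin n) :
    blk (M * E) i = ∑ j, dblk M i j * blk E j := by
  ext a b
  simp only [blk, dblk, of_apply, mul_apply, Matrix.sum_apply, Fintype.sum_prod_type]

lemma trace_transpose_mul_eq_sum_blk (X Y : Matrix (Fin n × Fin d) (Fin d) ℝ) :
    (Xᵀ * Y).trace = ∑ i, ((blk X i)ᵀ * blk Y i).trace := by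
  simp only [trace, diag, mul_apply, transpose_apply, blk, of_apply, Fintype.sum_prod_type]
  rw [Finset.sum_comm]

lemma frob_sq_eq_sum_blk (X : Matrix (Fin n × Fin d) (Fin d) ℝ) :
    frob X ^ 2 = ∑ i, frob (blk X i) ^ 2 := by
  simp only [frob_sq_eq_trace, trace_transpose_mul_eq_sum_blk]

lemma spec_blk_le_binf (X : Matrix (Fin n × Fin d) (Fin d) ℝ) (i : Fin n) :
    spec (blk X i) ≤ binf X :=
  le_ciSup (f := fun j => spec (blk X j)) (Set.finite_range _).bddAbove i

lemma binf_nonneg (X : Matrix (Fin n × Fin d) (Fin d) ℝ) : 0 ≤ binf X :=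
  Real.iSup_nonneg fun _ => norm_nonneg _

lemma binf_mul_of_isOd (X : Matrix (Fin n × Fin d) (Fin d) ℝ) {g : Matrix (Fin d) (Fin d) ℝ}
    (hg : IsOd g) : binf (X * g) = binf X :=
  iSup_congr fun i =>
    l2_opNorm_mul_of_mem_orthogonalGroup (blk X i) (isOd_iff_mem_orthogonalGroup.1 hg)

lemma OdN.mul_isOd {G : Matrix (Fin n × Fin d) (Fin d) ℝ} (hG : OdN G)
    {g : Matrix (Fin d) (Fin d) ℝ} (hg : IsOd g) : OdN (G * g) := fun i =>
  isOd_iff_mem_orthogonalGroup.2 <|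
    mul_mem (isOd_iff_mem_orthogonalGroup.1 (hG i)) (isOd_iff_mem_orthogonalGroup.1 hg)

def blkSingle (i : Fin n) (A : Matrix (Fin d) (Fin d) ℝ) : Matrix (Fin n × Fin d) (Fin d) ℝ :=
  of fun p b => if p.1 = i then A p.2 b else 0

lemma blk_blkSingle (i j : Fin n) (A : Matrix (Fin d) (Fin d) ℝ) :
    blk (blkSingle i A) j = if j = i then A else 0 := by
  ext a b
  by_cases h : j = i <;> simp [blk, blkSingle, h]

lemma obj_sub {C : Matrix (Fin n × Fin d) (Fin n × Fin d) ℝ} (hC : Cᵀ = C)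
    (H E : Matrix (Fin n × Fin d) (Fin d) ℝ) :
    obj C (H - E) = obj C H - 2 * (Eᵀ * (C * H)).trace + (Eᵀ * (C * E)).trace := by
  have hcross : (Hᵀ * (C * E)).trace = (Eᵀ * (C * H)).trace := by
    rw [← trace_transpose, transpose_mul, transpose_mul, hC, transpose_transpose, Matrix.mul_assoc]
  simp only [obj, transpose_sub, Matrix.sub_mul, Matrix.mul_sub, trace_sub, Matrix.mul_assoc,
    hcross]
  ring

lemma obj_mul_isOd (C : Matrix (Fin n × Fin d) (Fin n × Fin d) ℝ)
    (G : Matrix (Fin n × Fin d) (Fin d) ℝ) {g : Matrix (Fin d) (Fin d) ℝ} (hg : IsOd g) :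
    obj C (G * g) = obj C G := by
  have hconj : (G * g)ᵀ * C * (G * g) = gᵀ * (Gᵀ * C * G) * g := by
    simp only [transpose_mul, Matrix.mul_assoc]
  rw [obj, obj, hconj,
    trace_transpose_mul_mul_of_mem_orthogonalGroup (isOd_iff_mem_orthogonalGroup.1 hg)]

lemma obj_add_smul_one (C : Matrix (Fin n × Fin d) (Fin n × Fin d) ℝ) (α : ℝ)
    {G : Matrix (Fin n × Fin d) (Fin d) ℝ} (hG : OdN G) :
    obj (C + α • 1) G = obj C G + α * (n * d) := by
  have hGG : (Gᵀ * G).trace = n * d := by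
    simp [trace_transpose_mul_eq_sum_blk, (hG _).1]
  rw [obj, obj, Matrix.mul_add, Matrix.add_mul, trace_add, Matrix.mul_smul, Matrix.mul_one,
    Matrix.smul_mul, trace_smul, hGG, smul_eq_mul]

end Blocks

section Maximizer

open scoped Matrix.Norms.L2Operator

variable {C : Matrix (Fin n × Fin d) (Fin n × Fin d) ℝ} {H : Matrix (Fin n × Fin d) (Fin d) ℝ}

/-- Replacing the `i`-th block of a maximizer by any orthogonal `X` does not increase `obj`. -/
lemma trace_le_two_mul_trace_of_isMaxOn (hC : Cᵀ = C) (hH : OdN H)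
    (hmax : IsMaxOn (obj C) {G | OdN G} H) (i : Fin n) {X : Matrix (Fin d) (Fin d) ℝ}
    (hX : IsOd X) :
    ((blk H i - X)ᵀ * (dblk C i i * (blk H i - X))).trace
      ≤ 2 * ((blk H i - X)ᵀ * blk (C * H) i).trace := by
  set E := blkSingle i (blk H i - X)
  have hE : ∀ j, blk E j = if j = i then blk H i - X else 0 := fun j => blk_blkSingle i j _
  have hOdN : OdN (H - E) := fun j => by
    by_cases hj : j = i
    · subst hj; simpa [blk_sub, hE] using hX
    · simpa [blk_sub, hE, hj] using hH j
  have hsum : ∀ Y : Matrix (Fin n × Fin d) (Fin d) ℝ,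
      (Eᵀ * Y).trace = ((blk H i - X)ᵀ * blk Y i).trace := fun Y => by
    rw [trace_transpose_mul_eq_sum_blk, Finset.sum_eq_single i (fun j _ hj => by simp [hE, hj])
      (by simp), hE, if_pos rfl]
  have hCE : blk (C * E) i = dblk C i i * (blk H i - X) := by
    rw [blk_mul_eq_sum, Finset.sum_eq_single i (fun j _ hj => by simp [hE, hj]) (by simp), hE,
      if_pos rfl]
  have := hmax hOdN
  simp only [Set.mem_ofPred_eq, obj_sub hC, hsum, hCE] at this
  linarith

lemma posSemidef_blk_mul_transpose_of_isMaxOn (hC : Cᵀ = C)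
    (hCdiag : ∀ i, (dblk C i i).PosSemidef) (hH : OdN H)
    (hmax : IsMaxOn (obj C) {G | OdN G} H) (i : Fin n) :
    (blk (C * H) i * (blk H i)ᵀ).PosSemidef :=
  posSemidef_mul_transpose_of_forall_le (isOd_iff_mem_orthogonalGroup.1 (hH i)) (hCdiag i)
    fun _ hX => trace_le_two_mul_trace_of_isMaxOn hC hH hmax i (isOd_iff_mem_orthogonalGroup.2 hX)

lemma obj_sub_le_of_isMaxOn (hC : Cᵀ = C) (hCdiag : ∀ i, (dblk C i i).PosSemidef) (hH : OdN H)
    (hmax : IsMaxOn (obj C) {G | OdN G} H) {G : Matrix (Fin n × Fin d) (Fin d) ℝ} (hG : OdN G) :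
    obj C H - obj C G ≤ (spec C + binf (C * H)) * frob (H - G) ^ 2 := by
  set Δ := H - G
  have hquad : -(Δᵀ * (C * Δ)).trace ≤ spec C * frob Δ ^ 2 := by
    calc -(Δᵀ * (C * Δ)).trace = (-C * (Δ * Δᵀ)).trace := by
          rw [trace_mul_comm, Matrix.mul_assoc, Matrix.neg_mul, trace_neg]
      _ ≤ ‖-C‖ * (Δ * Δᵀ).trace := trace_mul_mul_transpose_le _ _
      _ = spec C * frob Δ ^ 2 := by
          rw [norm_neg, frob_sq_eq_trace, trace_mul_comm, spec_eq_l2_opNorm]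
  have hlin : 2 * (Δᵀ * (C * H)).trace ≤ binf (C * H) * frob Δ ^ 2 := by
    rw [trace_transpose_mul_eq_sum_blk, frob_sq_eq_sum_blk, Finset.mul_sum, Finset.mul_sum]
    refine Finset.sum_le_sum fun i _ => ?_
    calc 2 * ((blk Δ i)ᵀ * blk (C * H) i).trace ≤ spec (blk (C * H) i) * frob (blk Δ i) ^ 2 :=
          two_mul_trace_le_of_posSemidef (isOd_iff_mem_orthogonalGroup.1 (hH i))
            (isOd_iff_mem_orthogonalGroup.1 (hG i))
            (posSemidef_blk_mul_transpose_of_isMaxOn hC hCdiag hH hmax i)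
      _ ≤ binf (C * H) * frob (blk Δ i) ^ 2 := by gcongr; exact spec_blk_le_binf _ i
  have hG : G = H - Δ := by simp [Δ]
  rw [hG, obj_sub hC]
  linarith

end Maximizer

lemma le_mul_dOrth_sq {a K : ℝ} {X Y : Matrix (Fin n × Fin d) (Fin d) ℝ} (hK : 0 ≤ K)
    (h : ∀ g, IsOd g → a ≤ K * frob (X - Y * g) ^ 2) : a ≤ K * dOrth X Y ^ 2 := by
  have h1 : IsOd (1 : Matrix (Fin d) (Fin d) ℝ) := by simp [IsOd]
  have : Nonempty {g // IsOd g} := ⟨⟨1, h1⟩⟩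
  rcases le_or_gt a 0 with ha | ha
  · exact ha.trans (by positivity)
  have hKpos : 0 < K := hK.lt_of_ne <| by
    rintro rfl
    linarith [h 1 h1]
  have hsqrt : √(a / K) ≤ dOrth X Y := le_ciInf fun g => by
    rw [Real.sqrt_le_iff]
    exact ⟨Real.sqrt_nonneg _, (div_le_iff₀' hKpos).2 (h g.1 g.2)⟩
  calc a = K * √(a / K) ^ 2 := by rw [Real.sq_sqrt (by positivity)]; field_simp
    _ ≤ K * dOrth X Y ^ 2 := by gcongr

/-- cost-to-go estimate at a global maximizer.
Let `α ≥ 0`, `C` symmetric with positive semidefinite diagonal blocks, and let `Ĝ` be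
a global maximizer of (QP). Then for every `G ∈ O(d)^{⊗n}`,
`f(Ĝ) − f(G) ≤ (‖C̃‖ + ‖C̃ Ĝ‖_∞)·d(G, Ĝ)²`. -/
theorem cost_to_go_estimate {n d : ℕ}
    (C : Matrix (Fin n × Fin d) (Fin n × Fin d) ℝ) (hCsymm : Cᵀ = C)
    (hCdiag : ∀ i : Fin n, (dblk C i i).PosSemidef)
    (α : ℝ) (hα : 0 ≤ α)
    (Ct : Matrix (Fin n × Fin d) (Fin n × Fin d) ℝ)
    (hCt : Ct = C + α • (1 : Matrix (Fin n × Fin d) (Fin n × Fin d) ℝ))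
    (Gh : Matrix (Fin n × Fin d) (Fin d) ℝ) (hGh : OdN Gh)
    (hmax : ∀ G : Matrix (Fin n × Fin d) (Fin d) ℝ, OdN G → obj C G ≤ obj C Gh) :
    ∀ G : Matrix (Fin n × Fin d) (Fin d) ℝ, OdN G →
      obj C Gh - obj C G ≤ (spec Ct + binf (Ct * Gh)) * dOrth G Gh ^ 2 := by
  intro G hG
  have hCt_symm : Ctᵀ = Ct := by rw [hCt, transpose_add, hCsymm, transpose_smul, transpose_one]
  have hCt_diag : ∀ i, (dblk Ct i i).PosSemidef := fun i => by
    have : dblk Ct i i = dblk C i i + α • 1 := by ext a b; simp [hCt, dblk, one_apply]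
    rw [this]
    exact (hCdiag i).add (PosSemidef.one.smul hα)
  have hshift : ∀ {G'}, OdN G' → obj Ct G' = obj C G' + α * (n * d) := fun hG' => by
    rw [hCt, obj_add_smul_one C α hG']
  refine le_mul_dOrth_sq (add_nonneg (norm_nonneg _) (binf_nonneg _)) fun g hg => ?_
  have hmaxCt : IsMaxOn (obj Ct) {G | OdN G} (Gh * g) := isMaxOn_iff.2 fun G' hG' => by
    rw [obj_mul_isOd _ _ hg, hshift hG', hshift hGh]
    linarith [hmax G' hG']
  calc obj C Gh - obj C G = obj Ct (Gh * g) - obj Ct G := by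
        rw [obj_mul_isOd _ _ hg, hshift hGh, hshift hG]; ring
    _ ≤ (spec Ct + binf (Ct * (Gh * g))) * frob (Gh * g - G) ^ 2 :=
        obj_sub_le_of_isMaxOn hCt_symm hCt_diag (hGh.mul_isOd hg) hmaxCt hG
    _ = (spec Ct + binf (Ct * Gh)) * frob (G - Gh * g) ^ 2 := by
        rw [← Matrix.mul_assoc, binf_mul_of_isOd _ hg, frob_sub_comm]

end GroupSync
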